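/- arXiv:1610.10080 — 6 statements merged into one kernel-verified Lean document; each statement's English description precedes it below -/
import Mathlib

section
/- For any field element q ≠ 1 with q^k ≠ 1 for 1 ≤ k ≤ ℓ, and variables u_1,…,u_ℓ pairwise distinct, the symmetrization identity ∑_{σ∈S_ℓ} ∏_{1≤α<β≤ℓ} (u_{σ(α)} − q u_{σ(β)})/(u_{σ(α)} − u_{σ(β)}) = (q;q)_ℓ/(1−q)^ℓ holds. -/
/-!
Grouping the permutations by `p = σ 0` peels off the factor `∏_{j ≠ p} (u_p - q u_j)/(u_p - u_j)`
and leaves the same sum for the remaining `ℓ - 1` variables, so by induction everything reduces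
to the one-variable identity `(1 - q) ∑_i ∏_{j ≠ i} (x_i - q x_j)/(x_i - x_j) = 1 - q^n`.
That identity is Lagrange interpolation: with `P = ∏_j (X - q x_j)`, the polynomial
`g = (P(X) - P(qX)) / X` has degree `< n`, coefficient `1 - q^n` in degree `n - 1`, and value
`(1 - q) ∏_{j ≠ i} (x_i - q x_j)` at `x_i`; the left side is the `(n - 1)`-st coefficient of the
interpolant of these values.
-/

open Finset Polynomial Equiv Function

namespace Polynomial

variable {R : Type*} [CommRing R]

theorem coeff_comp_C_mul_X (p : R[X]) (q : R) (n : ℕ) :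
    (p.comp (C q * X)).coeff n = q ^ n * p.coeff n := by
  induction p using Polynomial.induction_on' with
  | add p r hp hr => rw [add_comp, coeff_add, coeff_add, hp, hr, mul_add]
  | monomial k a =>
    rw [← C_mul_X_pow_eq_monomial, mul_comp, C_comp, pow_comp, X_comp, mul_pow, ← C_pow,
      mul_left_comm, coeff_C_mul, coeff_C_mul, coeff_X_pow]
    split_ifs with h <;> simp [h]

/-- `(p(X) - p(qX)) / X`, that is, `1 - q` times the Jackson `q`-derivative of `p`. -/
noncomputable def qDiffQuot (q : R) (p : R[X]) : R[X] := (p - p.comp (C q * X)).divX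

theorem coeff_qDiffQuot (q : R) (p : R[X]) (n : ℕ) :
    (qDiffQuot q p).coeff n = (1 - q ^ (n + 1)) * p.coeff (n + 1) := by
  rw [qDiffQuot, coeff_divX, coeff_sub, coeff_comp_C_mul_X]
  ring

theorem X_mul_qDiffQuot (q : R) (p : R[X]) : X * qDiffQuot q p = p - p.comp (C q * X) := by
  have h := X_mul_divX_add (p - p.comp (C q * X))
  rwa [coeff_sub, coeff_comp_C_mul_X, pow_zero, one_mul, sub_self, C_0, add_zero] at h

theorem qDiffQuot_X_sub_C_mul (q a : R) (p : R[X]) :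
    qDiffQuot q ((X - C (q * a)) * p) = C (1 - q) * p + C q * (X - C a) * qDiffQuot q p := by
  have hcomp : ((X - C (q * a)) * p).comp (C q * X) = C q * (X - C a) * p.comp (C q * X) := by
    rw [mul_comp, sub_comp, X_comp, C_comp, map_mul]
    ring
  refine isRegular_X.left ?_
  change X * _ = X * _
  rw [X_mul_qDiffQuot, hcomp, map_sub, map_one, map_mul]
  linear_combination -(C q * (X - C a)) * X_mul_qDiffQuot q p

theorem eval_qDiffQuot_X_sub_C_mul (q a : R) (p : R[X]) :
    (qDiffQuot q ((X - C (q * a)) * p)).eval a = (1 - q) * p.eval a := by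
  rw [qDiffQuot_X_sub_C_mul]
  simp

end Polynomial

theorem one_sub_mul_sum_prod_div_sub {F ι : Type*} [Field F] [DecidableEq ι] {s : Finset ι}
    {v : ι → F} (hvs : Set.InjOn v s) (q : F) :
    (1 - q) * ∑ i ∈ s, ∏ j ∈ s.erase i, (v i - q * v j) / (v i - v j) = 1 - q ^ #s := by
  rcases s.eq_empty_or_nonempty with rfl | hs
  · simp
  set P := Lagrange.nodal s (fun j => q * v j)
  have hP : P.natDegree = #s := Lagrange.natDegree_nodal
  have hdeg : (qDiffQuot q P).degree < #s := by
    refine degree_lt_iff_coeff_zero _ _ |>.mpr fun m hm => ?_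
    rw [coeff_qDiffQuot, coeff_eq_zero_of_natDegree_lt (by omega), mul_zero]
  have hcoeff : (qDiffQuot q P).coeff (#s - 1) = 1 - q ^ #s := by
    rw [coeff_qDiffQuot, Nat.sub_add_cancel hs.card_pos, ← hP,
      Lagrange.nodal_monic.coeff_natDegree, mul_one]
  have heval : ∀ i ∈ s,
      (qDiffQuot q P).eval (v i) = (1 - q) * ∏ j ∈ s.erase i, (v i - q * v j) := by
    intro i hi
    rw [show P = _ from Lagrange.nodal_eq_mul_nodal_erase hi, eval_qDiffQuot_X_sub_C_mul,
      Lagrange.eval_nodal]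
  rw [← hcoeff, Lagrange.coeff_eq_sum hvs hdeg, mul_sum]
  refine sum_congr rfl fun i hi => ?_
  rw [heval i hi, prod_div_distrib, mul_div_assoc]

theorem Fin.prod_swap_zero_succ {M : Type*} [CommMonoid M] {n : ℕ} (p : Fin (n + 1))
    (f : Fin (n + 1) → M) : ∏ b : Fin n, f (swap 0 p b.succ) = ∏ j ∈ univ.erase p, f j := by
  have himage : univ.image (fun b : Fin n => swap 0 p b.succ) = univ.erase p := by
    ext j
    simp only [mem_image, mem_univ, true_and, mem_erase, and_true]
    constructor
    · rintro ⟨b, rfl⟩ h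
      simpa using (swap 0 p).injective (h.trans (swap_apply_left 0 p).symm)
    · intro hj
      refine ⟨(swap 0 p j).pred fun h => hj ?_, by simp⟩
      simpa using congrArg (swap 0 p) h
  rw [← himage, prod_image fun a _ b _ h => Fin.succ_injective _ ((swap 0 p).injective h)]

section sumPermProdLt

variable {R : Type*} [CommSemiring R]

def sumPermProdLt {n : ℕ} (g : Fin n → Fin n → R) : R :=
  ∑ σ : Perm (Fin n), ∏ α, ∏ β, if α < β then g (σ α) (σ β) else 1

theorem sumPermProdLt_succ {n : ℕ} (g : Fin (n + 1) → Fin (n + 1) → R) :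
    sumPermProdLt g = ∑ p, (∏ j ∈ univ.erase p, g p j) *
      sumPermProdLt (fun a b => g (swap 0 p a.succ) (swap 0 p b.succ)) := by
  rw [sumPermProdLt, ← Equiv.sum_comp Perm.decomposeFin.symm, Fintype.sum_prod_type]
  refine sum_congr rfl fun p _ => ?_
  rw [sumPermProdLt, mul_sum]
  refine sum_congr rfl fun e _ => ?_
  rw [Fin.prod_univ_succ]
  congr 1
  · rw [Fin.prod_univ_succ, ← Fin.prod_swap_zero_succ]
    simp only [Perm.decomposeFin_symm_apply_zero, Perm.decomposeFin_symm_apply_succ,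
      lt_self_iff_false, if_false, Fin.succ_pos, if_true, one_mul]
    exact Equiv.prod_comp e fun b => g p (swap 0 p b.succ)
  · refine prod_congr rfl fun a _ => ?_
    rw [Fin.prod_univ_succ, if_neg (Fin.not_lt_zero _), one_mul]
    simp only [Fin.succ_lt_succ_iff, Perm.decomposeFin_symm_apply_succ]

end sumPermProdLt

theorem one_sub_pow_mul_sumPermProdLt {F : Type*} [Field F] (q : F) {n : ℕ} {u : Fin n → F}
    (hu : Injective u) :
    (1 - q) ^ n * sumPermProdLt (fun a b => (u a - q * u b) / (u a - u b))
      = ∏ i ∈ range n, (1 - q ^ (i + 1)) := by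
  induction n with
  | zero => simp [sumPermProdLt]
  | succ n ih =>
    have hrest (p : Fin (n + 1)) := ih (u := fun b => u (swap 0 p b.succ))
      (hu.comp ((swap 0 p).injective.comp (Fin.succ_injective _)))
    calc (1 - q) ^ (n + 1) * sumPermProdLt (fun a b => (u a - q * u b) / (u a - u b))
        = ∑ p, (1 - q) * (∏ j ∈ univ.erase p, (u p - q * u j) / (u p - u j))
            * ∏ i ∈ range n, (1 - q ^ (i + 1)) := by
          rw [sumPermProdLt_succ, mul_sum]
          refine sum_congr rfl fun p _ => ?_
          rw [← hrest p]
          ring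
      _ = ∏ i ∈ range (n + 1), (1 - q ^ (i + 1)) := by
          rw [← sum_mul, ← mul_sum, one_sub_mul_sum_prod_div_sub hu.injOn, card_univ,
            Fintype.card_fin, prod_range_succ, mul_comm]

theorem symmetrization_identity_general {F : Type*} [Field F] (ℓ : ℕ) (q : F)
    (hq : q ≠ 1)
    (u : Fin ℓ → F) (hu : Function.Injective u) :
    ∑ σ : Equiv.Perm (Fin ℓ),
        ∏ p ∈ Finset.univ.filter (fun p : Fin ℓ × Fin ℓ => p.1 < p.2),
          (u (σ p.1) - q * u (σ p.2)) / (u (σ p.1) - u (σ p.2))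
      = (∏ i ∈ Finset.range ℓ, (1 - q ^ (i + 1))) / (1 - q) ^ ℓ := by
  have h1q : (1 - q) ^ ℓ ≠ 0 := pow_ne_zero _ (sub_ne_zero.mpr hq.symm)
  rw [eq_div_iff h1q, mul_comm, ← one_sub_pow_mul_sumPermProdLt q hu, sumPermProdLt]
  simp only [prod_filter, Fintype.prod_prod_type]

/-- the symmetrization identity
`∑_{σ ∈ S_ℓ} ∏_{α<β} (u_{σ(α)} - q u_{σ(β)})/(u_{σ(α)} - u_{σ(β)}) = (q;q)_ℓ/(1-q)^ℓ`
for `q` with `q ≠ 1`, `q^k ≠ 1` for `1 ≤ k ≤ ℓ`, and pairwise distinct `u_1,…,u_ℓ`. -/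
theorem symmetrization_identity {F : Type*} [Field F] (ℓ : ℕ) (q : F)
    (hq : q ≠ 1) (hqk : ∀ k, 1 ≤ k → k ≤ ℓ → q ^ k ≠ 1)
    (u : Fin ℓ → F) (hu : Function.Injective u) :
    ∑ σ : Equiv.Perm (Fin ℓ),
        ∏ p ∈ Finset.univ.filter (fun p : Fin ℓ × Fin ℓ => p.1 < p.2),
          (u (σ p.1) - q * u (σ p.2)) / (u (σ p.1) - u (σ p.2))
      = (∏ i ∈ Finset.range ℓ, (1 - q ^ (i + 1))) / (1 - q) ^ ℓ :=
  symmetrization_identity_general ℓ q hq u hu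
end

section
/- In the polynomial ring over the rationals in indeterminates X_1,…,X_ℓ, b_1,…,b_ℓ, q, the identity ∑_{k=0}^{ℓ} q^{ℓ(ℓ+1)/2 − k(k+1)/2} ∑_{I={i_1<…<i_k}⊆{1,…,ℓ}} (∏_{r∉I} b_r) · (X_{i_1} − q^{k−1+i_1} b_{i_1})(X_{i_2} − q^{k−2+i_2} b_{i_2}) ⋯ (X_{i_k} − q^{i_k} b_{i_k}) = X_1 X_2 ⋯ X_ℓ holds. -/
/-!
Induction on the largest index `a` of a general finite index set `s`, with `b` left arbitrary.
Subsets not containing `a` contribute `q ^ (#s + 1) * b a` times the sum for `s`; subsets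
containing `a` contribute `X a - q ^ (#s + 1) * b a` times the sum for `s` with `b` replaced by
`q * b`, because adding `a` raises every remaining exponent by one. The two parts add up to
`X a * ∏ i ∈ s, X i`.
-/

open MvPolynomial

/-- The variable `X_i` in the polynomial ring `ℚ[X_1,…,X_ℓ,b_1,…,b_ℓ,q]`. -/
noncomputable def Xv (ℓ : ℕ) (i : Fin ℓ) : MvPolynomial (Fin ℓ ⊕ Fin ℓ ⊕ Unit) ℚ :=
  MvPolynomial.X (Sum.inl i)

/-- The variable `b_i` in the polynomial ring `ℚ[X_1,…,X_ℓ,b_1,…,b_ℓ,q]`. -/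
noncomputable def bv (ℓ : ℕ) (i : Fin ℓ) : MvPolynomial (Fin ℓ ⊕ Fin ℓ ⊕ Unit) ℚ :=
  MvPolynomial.X (Sum.inr (Sum.inl i))

/-- The variable `q` in the polynomial ring `ℚ[X_1,…,X_ℓ,b_1,…,b_ℓ,q]`. -/
noncomputable def qv (ℓ : ℕ) : MvPolynomial (Fin ℓ ⊕ Fin ℓ ⊕ Unit) ℚ :=
  MvPolynomial.X (Sum.inr (Sum.inr ()))

open Finset

lemma succ_mul_succ_add_one_div_two (n : ℕ) :
    (n + 1) * (n + 1 + 1) / 2 = n * (n + 1) / 2 + (n + 1) := by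
  rw [show (n + 1) * (n + 1 + 1) = n * (n + 1) + 2 * (n + 1) by ring,
    Nat.add_mul_div_left _ _ two_pos]

lemma mul_succ_div_two_mono {k n : ℕ} (h : k ≤ n) : k * (k + 1) / 2 ≤ n * (n + 1) / 2 :=
  Nat.div_le_div_right (Nat.mul_le_mul h (Nat.succ_le_succ h))

section FormalSummand

variable {ι R : Type*} [LinearOrder ι] [CommRing R]

/-- For `i = i_j` in `I = {i_1 < ⋯ < i_k}`, the exponent of `q` in its factor is `k - j` plus the
position of `i` in `s`; for `s = {1, …, ℓ}` this is the paper's `(k - j) + i_j`. -/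
def formalSummand (q : R) (X b : ι → R) (s I : Finset ι) : R :=
  q ^ (#s * (#s + 1) / 2 - #I * (#I + 1) / 2) *
    ((∏ r ∈ s \ I, b r) *
      ∏ i ∈ I, (X i - q ^ (#(I.filter (i < ·)) + #(s.filter (· ≤ i))) * b i))

variable {q : R} {X : ι → R} {s I : Finset ι} {a : ι}

lemma filter_le_insert_of_lt {i : ι} (hi : i < a) :
    (insert a s).filter (· ≤ i) = s.filter (· ≤ i) := by
  rw [filter_insert, if_neg hi.not_ge]

lemma formalSummand_insert_of_subset (b : ι → R) (hmax : ∀ x ∈ s, x < a) (hI : I ⊆ s) :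
    formalSummand q X b (insert a s) I = q ^ (#s + 1) * b a * formalSummand q X b s I := by
  have ha : a ∉ s := fun h => (hmax a h).false
  have hexp : #(insert a s) * (#(insert a s) + 1) / 2 - #I * (#I + 1) / 2
      = (#s + 1) + (#s * (#s + 1) / 2 - #I * (#I + 1) / 2) := by
    have := mul_succ_div_two_mono (card_le_card hI)
    rw [card_insert_of_notMem ha, succ_mul_succ_add_one_div_two]
    omega
  have hsdiff : insert a s \ I = insert a (s \ I) := insert_sdiff_of_notMem _ (fun h => ha (hI h))
  have hfactors : ∀ i ∈ I,
      X i - q ^ (#(I.filter (i < ·)) + #((insert a s).filter (· ≤ i))) * b i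
        = X i - q ^ (#(I.filter (i < ·)) + #(s.filter (· ≤ i))) * b i := fun i hi => by
    rw [filter_le_insert_of_lt (hmax i (hI hi))]
  rw [formalSummand, formalSummand, hexp, hsdiff, prod_congr rfl hfactors,
    prod_insert (fun h => ha (mem_sdiff.mp h).1), pow_add]
  ring

lemma formalSummand_insert_insert (b : ι → R) (hmax : ∀ x ∈ s, x < a) (hI : I ⊆ s) :
    formalSummand q X b (insert a s) (insert a I)
      = (X a - q ^ (#s + 1) * b a) * formalSummand q X (fun i => q * b i) s I := by
  have ha : a ∉ s := fun h => (hmax a h).false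
  have haI : a ∉ I := fun h => ha (hI h)
  have hexp : #(insert a s) * (#(insert a s) + 1) / 2 - #(insert a I) * (#(insert a I) + 1) / 2
      = (#s - #I) + (#s * (#s + 1) / 2 - #I * (#I + 1) / 2) := by
    have hcard := card_le_card hI
    have := mul_succ_div_two_mono hcard
    rw [card_insert_of_notMem ha, card_insert_of_notMem haI, succ_mul_succ_add_one_div_two,
      succ_mul_succ_add_one_div_two]
    omega
  have hsdiff : insert a s \ insert a I = s \ I := by
    rw [insert_sdiff_insert, sdiff_insert_of_notMem ha]
  have hcompl : ∏ r ∈ s \ I, q * b r = q ^ (#s - #I) * ∏ r ∈ s \ I, b r := by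
    rw [prod_mul_distrib, prod_const, card_sdiff_of_subset hI]
  have hfactor_a :
      X a - q ^ (#((insert a I).filter (a < ·)) + #((insert a s).filter (· ≤ a))) * b a
        = X a - q ^ (#s + 1) * b a := by
    rw [filter_insert, if_neg (lt_irrefl a), filter_eq_empty_iff.mpr
      (fun x hx => (hmax x (hI hx)).not_gt), filter_true_of_mem
      (fun x hx => (mem_insert.mp hx).elim le_of_eq (fun hx => (hmax x hx).le)),
      card_empty, card_insert_of_notMem ha, zero_add]
  have hfactors : ∀ i ∈ I,
      X i - q ^ (#((insert a I).filter (i < ·)) + #((insert a s).filter (· ≤ i))) * b i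
        = X i - q ^ (#(I.filter (i < ·)) + #(s.filter (· ≤ i))) * (q * b i) := fun i hi => by
    have hia := hmax i (hI hi)
    rw [filter_insert, if_pos hia, card_insert_of_notMem (fun h => haI (mem_filter.mp h).1),
      filter_le_insert_of_lt hia]
    ring
  rw [formalSummand, formalSummand, hexp, hsdiff, prod_insert haI, hfactor_a,
    prod_congr rfl hfactors, hcompl, pow_add]
  ring

theorem sum_powerset_formalSummand (q : R) (X b : ι → R) (s : Finset ι) :
    ∑ I ∈ s.powerset, formalSummand q X b s I = ∏ i ∈ s, X i := by
  induction s using Finset.induction_on_max generalizing b with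
  | empty => simp [formalSummand]
  | insert a s hmax ih =>
    have ha : a ∉ s := fun h => (hmax a h).false
    rw [sum_powerset_insert ha, prod_insert ha,
      sum_congr rfl fun I hI => formalSummand_insert_of_subset b hmax (mem_powerset.mp hI),
      sum_congr rfl fun I hI => formalSummand_insert_insert b hmax (mem_powerset.mp hI),
      ← mul_sum, ← mul_sum, ih, ih]
    ring

end FormalSummand

/-- the formal identity
`∑_{k=0}^{ℓ} q^{ℓ(ℓ+1)/2 - k(k+1)/2} ∑_{I={i_1<…<i_k}} (∏_{r∉I} b_r)
 ∏_{j=1}^{k} (X_{i_j} - q^{(k-j)+i_j} b_{i_j}) = X_1 ⋯ X_ℓ`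
in the polynomial ring over `ℚ` in the indeterminates `X_1,…,X_ℓ, b_1,…,b_ℓ, q`.
For `i ∈ I` at (1-based) position `j`, the exponent `(k-j)+i_j` equals
`#{x ∈ I : x > i} + (i+1)` where `i+1` is the 1-based index of `i`. -/
theorem formal_identity (ℓ : ℕ) :
    ∑ k ∈ Finset.range (ℓ + 1),
        (qv ℓ) ^ (ℓ * (ℓ + 1) / 2 - k * (k + 1) / 2) *
          ∑ I ∈ Finset.powersetCard k (Finset.univ : Finset (Fin ℓ)),
            (∏ r ∈ Iᶜ, bv ℓ r) *
              ∏ i ∈ I,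
                (Xv ℓ i - (qv ℓ) ^ ((I.filter (fun x => i < x)).card + i.val + 1) * bv ℓ i)
      = ∏ i : Fin ℓ, Xv ℓ i := by
  have hrank : ∀ i : Fin ℓ, #(univ.filter (· ≤ i)) = i.val + 1 := fun i => by
    rw [filter_ge_eq_Iic, Fin.card_Iic]
  rw [← sum_powerset_formalSummand (qv ℓ) (Xv ℓ) (bv ℓ) univ, sum_powerset]
  refine sum_congr (by simp) fun k _ => ?_
  rw [mul_sum]
  refine sum_congr (by simp) fun I hI => ?_
  simp only [formalSummand, card_univ, Fintype.card_fin, (mem_powersetCard.mp hI).2,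
    ← compl_eq_univ_sdiff, hrank, add_assoc]
end

section
/- Define the operator D_N := ∑_{r=1}^{N} (1 − ν_r) (∏_{i≠r, 1≤i≤N} (a_i − ν_i a_r)/(a_i − a_r)) T_{q;a_r} T_{q;ν_r}, where T_{q;x} is the q-shift substituting x ↦ qx. Then D_N applied to the constant function 1 equals 1 − ν_1 ν_2 ⋯ ν_N. -/
open Polynomial Finset

/-- Key polynomial identity obtained from Lagrange interpolation, evaluated at `0`. -/
lemma DN_key {F : Type*} [Field F] (N : ℕ) (a ν : Fin N → F)
    (hinj : Function.Injective a) :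
    ∑ r : Fin N, (∏ i : Fin N, (a i - ν i * a r)) *
        ∏ i ∈ Finset.univ.erase r, ((a r - a i)⁻¹ * (0 - a i))
      = ∏ i : Fin N, a i - (∏ i : Fin N, ν i) * ∏ i : Fin N, a i := by
  classical
  set P : F[X] := ∏ i : Fin N, (C (a i) - C (ν i) * X) with hP
  set Q : F[X] := ∏ i : Fin N, (C (a i) - X) with hQ
  set f : F[X] := P - C (∏ i : Fin N, ν i) * Q with hf
  have hlin1 : ∀ c d : F, (C c - C d * X).natDegree ≤ 1 := fun c d =>
    le_trans (natDegree_sub_le _ _) (max_le (by simp)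
      (le_trans natDegree_mul_le (by simp)))
  have hlin2 : ∀ c : F, (C c - X).natDegree ≤ 1 := fun c =>
    le_trans (natDegree_sub_le _ _) (max_le (by simp) (by simp))
  have hdegP : P.natDegree ≤ N := by
    refine le_trans (natDegree_prod_le _ _) ?_
    calc ∑ i : Fin N, (C (a i) - C (ν i) * X).natDegree
        ≤ ∑ _i : Fin N, 1 := by exact Finset.sum_le_sum fun i _ => hlin1 (a i) (ν i)
      _ = N := by simp
  have hdegQ : Q.natDegree ≤ N := by
    refine le_trans (natDegree_prod_le _ _) ?_
    calc ∑ i : Fin N, (C (a i) - X).natDegree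
        ≤ ∑ _i : Fin N, 1 := by exact Finset.sum_le_sum fun i _ => hlin2 (a i)
      _ = N := by simp
  have hcoeffP : P.coeff N = ∏ i : Fin N, (-(ν i)) := by
    have := coeff_prod_of_natDegree_le (s := (Finset.univ : Finset (Fin N)))
      (fun i => C (a i) - C (ν i) * X) 1 (fun p _ => hlin1 _ _)
    simp only [Finset.card_univ, Fintype.card_fin, mul_one] at this
    rw [hP, this]
    refine Finset.prod_congr rfl fun i _ => ?_
    simp [coeff_sub, coeff_C]
  have hcoeffQ : Q.coeff N = ∏ _i : Fin N, (-1 : F) := by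
    have := coeff_prod_of_natDegree_le (s := (Finset.univ : Finset (Fin N)))
      (fun i => C (a i) - X) 1 (fun p _ => hlin2 _)
    simp only [Finset.card_univ, Fintype.card_fin, mul_one] at this
    rw [hQ, this]
    refine Finset.prod_congr rfl fun i _ => ?_
    simp [coeff_sub, coeff_C]
  have hdegf : f.degree < (N : ℕ) := by
    rw [degree_lt_iff_coeff_zero]
    intro m hm
    rcases eq_or_lt_of_le hm with h | h
    · subst h
      rw [hf, coeff_sub, coeff_C_mul, hcoeffP, hcoeffQ]
      rw [show (∏ i : Fin N, (-(ν i))) = (∏ _i : Fin N, (-1 : F)) * ∏ i : Fin N, ν i by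
        rw [← Finset.prod_mul_distrib]; simp]
      ring
    · apply coeff_eq_zero_of_natDegree_lt
      refine lt_of_le_of_lt ?_ h
      refine le_trans (natDegree_sub_le _ _) ?_
      refine max_le hdegP (le_trans (natDegree_mul_le) ?_)
      rw [natDegree_C]
      simpa using hdegQ
  have hinjOn : Set.InjOn a (Finset.univ : Finset (Fin N)) := fun x _ y _ h => hinj h
  have hcard : f.degree < ((Finset.univ : Finset (Fin N)).card : ℕ) := by
    simpa [Finset.card_univ] using hdegf
  have hinterp := Lagrange.eq_interpolate (s := (Finset.univ : Finset (Fin N)))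
      (v := a) hinjOn hcard
  -- evaluate at 0
  have heval0 := congrArg (Polynomial.eval (0 : F)) hinterp
  have hQeval : ∀ r : Fin N, Q.eval (a r) = 0 := by
    intro r
    rw [hQ, eval_prod]
    exact Finset.prod_eq_zero (Finset.mem_univ r) (by simp)
  have hfeval : ∀ r : Fin N, f.eval (a r) = ∏ i : Fin N, (a i - ν i * a r) := by
    intro r
    rw [hf, eval_sub, eval_mul, hQeval r, mul_zero, sub_zero, hP, eval_prod]
    simp
  have hf0 : f.eval 0 = ∏ i : Fin N, a i - (∏ i : Fin N, ν i) * ∏ i : Fin N, a i := by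
    rw [hf, eval_sub, eval_mul, eval_C, hP, hQ, eval_prod, eval_prod]
    simp
  rw [hf0] at heval0
  rw [Lagrange.interpolate_apply] at heval0
  simp only [eval_finset_sum, eval_mul, eval_C, Lagrange.basis, eval_prod,
    Lagrange.basisDivisor, eval_mul, eval_C, eval_sub, eval_X] at heval0
  rw [heval0]
  refine Finset.sum_congr rfl fun r _ => ?_
  rw [hfeval r]

/-- the operator `D_N = ∑_r (1-ν_r) (∏_{i≠r} (a_i - ν_i a_r)/(a_i - a_r))
T_{q;a_r} T_{q;ν_r}` applied to the constant function `1` equals `1 - ν_1 ⋯ ν_N`.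
Since the shifts act trivially on the constant function, this is the rational
function identity below, for pairwise distinct nonzero `a_1,…,a_N`. -/
theorem DN_apply_one {F : Type*} [Field F] (N : ℕ) (a ν : Fin N → F)
    (ha0 : ∀ i, a i ≠ 0) (hinj : Function.Injective a) :
    ∑ r : Fin N, (1 - ν r) *
        ∏ i ∈ Finset.univ.erase r, (a i - ν i * a r) / (a i - a r)
      = 1 - ∏ i : Fin N, ν i := by
  classical
  have hA : (∏ i : Fin N, a i) ≠ 0 := Finset.prod_ne_zero_iff.2 fun i _ => ha0 i
  have key := DN_key N a ν hinj
  apply mul_left_cancel₀ hA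
  rw [Finset.mul_sum]
  have hterm : ∀ r : Fin N,
      (∏ i : Fin N, a i) * ((1 - ν r) *
          ∏ i ∈ Finset.univ.erase r, (a i - ν i * a r) / (a i - a r))
        = (∏ i : Fin N, (a i - ν i * a r)) *
          ∏ i ∈ Finset.univ.erase r, ((a r - a i)⁻¹ * (0 - a i)) := by
    intro r
    rw [← Finset.mul_prod_erase _ a (Finset.mem_univ r),
      ← Finset.mul_prod_erase _ (fun i => a i - ν i * a r) (Finset.mem_univ r)]
    have hfac : ∀ i ∈ Finset.univ.erase r,
        a i * ((a i - ν i * a r) / (a i - a r))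
          = (a i - ν i * a r) * ((a r - a i)⁻¹ * (0 - a i)) := by
      intro i _
      rw [show (a r - a i) = -(a i - a r) by ring, inv_neg, div_eq_mul_inv]
      ring
    have hprod := Finset.prod_congr rfl hfac
    rw [Finset.prod_mul_distrib, Finset.prod_mul_distrib] at hprod
    linear_combination (a r * (1 - ν r)) * hprod
  calc ∑ r : Fin N, (∏ i : Fin N, a i) * ((1 - ν r) *
          ∏ i ∈ Finset.univ.erase r, (a i - ν i * a r) / (a i - a r))
      = ∑ r : Fin N, (∏ i : Fin N, (a i - ν i * a r)) *
          ∏ i ∈ Finset.univ.erase r, ((a r - a i)⁻¹ * (0 - a i)) :=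
        Finset.sum_congr rfl fun r _ => hterm r
    _ = ∏ i : Fin N, a i - (∏ i : Fin N, ν i) * ∏ i : Fin N, a i := key
    _ = (∏ i : Fin N, a i) * (1 - ∏ i : Fin N, ν i) := by ring
end

section
/- With D_N as above, the commutation relation D_N ∘ M_u = q · M_u ∘ D_N holds, where M_u denotes multiplication by the function ∏_{i=1}^{N} (ν_i − a_i u) for an indeterminate u. -/
/-- The operator `D_N = ∑_r (1 - ν_r) (∏_{i≠r} (a_i - ν_i a_r)/(a_i - a_r))
T_{q;a_r} T_{q;ν_r}` acting on functions of `(a_1,…,a_N, ν_1,…,ν_N)`;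
`T_{q;x}` multiplies the corresponding variable by `q`. -/
noncomputable def DOp {F : Type*} [Field F] (N : ℕ) (q : F)
    (f : (Fin N → F) → (Fin N → F) → F) : (Fin N → F) → (Fin N → F) → F :=
  fun a ν => ∑ r : Fin N,
    (1 - ν r) * (∏ i ∈ Finset.univ.erase r, (a i - ν i * a r) / (a i - a r)) *
      f (Function.update a r (q * a r)) (Function.update ν r (q * ν r))

/-- the commutation relation `D_N ∘ M_u = q · M_u ∘ D_N`, where `M_u`
is multiplication by `∏_{i=1}^N (ν_i - a_i u)`. -/
theorem DOp_commutes_with_mult {F : Type*} [Field F] (N : ℕ) (q u : F)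
    (f : (Fin N → F) → (Fin N → F) → F) (a ν : Fin N → F) :
    DOp N q (fun a ν => (∏ i : Fin N, (ν i - a i * u)) * f a ν) a ν
      = q * ((∏ i : Fin N, (ν i - a i * u)) * DOp N q f a ν) := by
  unfold DOp
  rw [Finset.mul_sum, Finset.mul_sum]
  refine Finset.sum_congr rfl fun r _ => ?_
  have h : (∏ i : Fin N, (Function.update ν r (q * ν r) i
        - Function.update a r (q * a r) i * u))
      = q * ∏ i : Fin N, (ν i - a i * u) := by
    rw [← Finset.mul_prod_erase _ _ (Finset.mem_univ r),
        ← Finset.mul_prod_erase _ (fun i => ν i - a i * u) (Finset.mem_univ r)]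
    rw [Finset.prod_congr rfl (fun i hi => by
      rw [Function.update_of_ne (Finset.ne_of_mem_erase hi),
          Function.update_of_ne (Finset.ne_of_mem_erase hi)])]
    simp only [Function.update_self]
    ring
  simp only [h]
  ring
end

section
/- For the q-deformed truncated geometric weights p_{m,α}(j), the identity p_{g+1,α}(j) − α p_{g,α}(j−1) = (q^j − α q^g) p_{g,α}(j) holds for all integers g ≥ 0 and 1 ≤ j ≤ g. -/
/-- The finite q-Pochhammer symbol `(z;q)_k = ∏_{i=0}^{k-1} (1 - z q^i)`. -/
noncomputable def qPoch (q z : ℝ) (k : ℕ) : ℝ := ∏ i ∈ Finset.range k, (1 - z * q ^ i)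

/-- The q-deformed truncated geometric weight
`p_{m,α}(j) = α^j (α;q)_{m-j} (q;q)_m / ((q;q)_j (q;q)_{m-j})`. -/
noncomputable def pTrunc (q α : ℝ) (m j : ℕ) : ℝ :=
  α ^ j * qPoch q α (m - j) * qPoch q q m / (qPoch q q j * qPoch q q (m - j))

lemma qPoch_succ (q z : ℝ) (k : ℕ) :
    qPoch q z (k + 1) = qPoch q z k * (1 - z * q ^ k) :=
  Finset.prod_range_succ _ _

lemma qPoch_self_ne_zero {q : ℝ} (hq0 : 0 < q) (hq1 : q < 1) (n : ℕ) : qPoch q q n ≠ 0 :=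
  Finset.prod_ne_zero_iff.mpr fun i _ ↦ by
    rw [← pow_succ', sub_ne_zero]
    exact (pow_lt_one₀ hq0.le hq1 i.succ_ne_zero).ne'

lemma one_sub_mul_pow_ne_zero {q : ℝ} (hq : ∀ n, qPoch q q n ≠ 0) (k : ℕ) :
    1 - q * q ^ k ≠ 0 :=
  right_ne_zero_of_mul (qPoch_succ q q k ▸ hq (k + 1))

lemma pTrunc_add_left (q α : ℝ) (j k : ℕ) :
    pTrunc q α (j + k) j
      = α ^ j * qPoch q α k * qPoch q q (j + k) / (qPoch q q j * qPoch q q k) := by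
  simp only [pTrunc, Nat.add_sub_cancel_left]

/-- Writing `j = i + 1` and `g = j + k`, both terms on the left are multiples of one weight `c`,
by `1 - q^{g+1}` and `1 - q^j` respectively; their difference `q^j (1 - q^{k+1})` cancels
against the last factor of `(q;q)_{k+1}` in `c`. -/
lemma pTrunc_succ_sub_mul_pTrunc {q : ℝ} (α : ℝ) (hq : ∀ n, qPoch q q n ≠ 0) (i k : ℕ) :
    pTrunc q α (i + 1 + k + 1) (i + 1) - α * pTrunc q α (i + 1 + k) i
      = (q ^ (i + 1) - α * q ^ (i + 1 + k)) * pTrunc q α (i + 1 + k) (i + 1) := by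
  set c := α ^ (i + 1) * qPoch q α (k + 1) * qPoch q q (i + 1 + k)
    / (qPoch q q (i + 1) * qPoch q q (k + 1))
  have h_top : pTrunc q α (i + 1 + k + 1) (i + 1) = c * (1 - q * q ^ (i + 1 + k)) := by
    rw [show i + 1 + k + 1 = (i + 1) + (k + 1) by ring, pTrunc_add_left,
      show (i + 1) + (k + 1) = (i + 1 + k) + 1 by ring, qPoch_succ q q (i + 1 + k)]
    ring
  have h_left : α * pTrunc q α (i + 1 + k) i = c * (1 - q * q ^ i) := by
    rw [show i + 1 + k = i + (k + 1) by ring, pTrunc_add_left]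
    simp only [c, show i + (k + 1) = i + 1 + k by ring, qPoch_succ q q i]
    have := one_sub_mul_pow_ne_zero hq i
    field_simp
    ring
  have h_right : c * (1 - q * q ^ k) = (1 - α * q ^ k) * pTrunc q α (i + 1 + k) (i + 1) := by
    rw [pTrunc_add_left]
    simp only [c, qPoch_succ q q k, qPoch_succ q α k]
    rw [div_mul_eq_mul_div, ← mul_assoc (qPoch q q (i + 1)),
      mul_div_mul_right _ _ (one_sub_mul_pow_ne_zero hq k)]
    ring
  calc _ = q ^ (i + 1) * (c * (1 - q * q ^ k)) := by rw [h_top, h_left]; ring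
    _ = _ := by rw [h_right]; ring

/-- the recurrence
`p_{g+1,α}(j) − α p_{g,α}(j−1) = (q^j − α q^g) p_{g,α}(j)` for `g ≥ 0`, `1 ≤ j ≤ g`. -/
theorem pTrunc_recurrence_two (q α : ℝ) (hq0 : 0 < q) (hq1 : q < 1)
    (g j : ℕ) (hj : 1 ≤ j) (hjg : j ≤ g) :
    pTrunc q α (g + 1) j - α * pTrunc q α g (j - 1)
      = (q ^ j - α * q ^ g) * pTrunc q α g j := by
  obtain ⟨i, rfl⟩ : ∃ i, j = i + 1 := ⟨j - 1, by omega⟩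
  obtain ⟨k, rfl⟩ : ∃ k, g = i + 1 + k := ⟨g - (i + 1), by omega⟩
  exact pTrunc_succ_sub_mul_pTrunc α (qPoch_self_ne_zero hq0 hq1) i k
end

section
/- Evaluation of the D_N integral for f ≡ 1: −(1/(2πi)) ∮ (∏_{i=1}^{N} (a_i − ν_i z)/(a_i − z)) ∏_{j=1}^{T} ((1 − q u_j z)/(1 − u_j z)) dz/z, over a contour enclosing a_1,…,a_N only, equals 1 − q^T ν_1⋯ν_N − (1 − q) ∑_{j=1}^{T} (∏_{i=1}^{N} (ν_i − a_i u_j)/(1 − a_i u_j)) ∏_{β≠j} (u_j − q u_β)/(u_j − u_β). -/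
/-! In the variable `z`, the integrand is `P(z) / ∏ₖ (z - wₖ)`, where the simple poles `wₖ` are
`0`, the `aᵢ` and the `u_j⁻¹`, and `P = ∏ᵢ (νᵢ X - aᵢ) ∏ⱼ (q X - u_j⁻¹)` has degree below the
number `N + T + 1` of poles. Lagrange interpolation of `P` at the poles gives the partial fraction
decomposition `∑ₖ ρₖ / (z - wₖ)`, so the contour integral is `2πi` times the sum of the residues at
the `aᵢ`. Comparing coefficients of `X^(N+T)` in the same interpolation formula shows that all
residues add up to `q^T ∏ᵢ νᵢ` (the residue at infinity), while the residue at `0` is `1` and the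
residue at `u_j⁻¹` is the `j`-th summand of the claimed formula, times `-(1 - q)`. -/

open Complex Metric Finset Polynomial
open scoped Real

namespace Lagrange

variable {F ι : Type*} [Field F] [DecidableEq ι]

/-- The residue of `P / ∏ j ∈ s, (X - C (v j))` at the simple pole `v i`. -/
noncomputable def nodalResidue (s : Finset ι) (v : ι → F) (P : F[X]) (i : ι) : F :=
  P.eval (v i) / ∏ j ∈ s.erase i, (v i - v j)

theorem eval_div_prod_sub_eq_sum_nodalResidue {s : Finset ι} {v : ι → F} (hvs : Set.InjOn v s)
    {P : F[X]} (hP : P.degree < #s) {x : F} (hx : ∀ i ∈ s, x ≠ v i) :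
    P.eval x / ∏ i ∈ s, (x - v i) = ∑ i ∈ s, nodalResidue s v P i / (x - v i) := by
  nth_rewrite 1 [eq_interpolate hvs hP]
  rw [eval_interpolate_not_at_node _ hx, ← eval_nodal,
    mul_div_cancel_left₀ _ (eval_nodal_not_at_node hx)]
  refine sum_congr rfl fun i _ => ?_
  rw [nodalResidue, nodalWeight, prod_inv_distrib, div_div, div_eq_mul_inv, mul_inv, mul_comm]

end Lagrange

open Lagrange

theorem Fintype.prod_erase_eq_prod_update {ι M : Type*} [Fintype ι] [DecidableEq ι]
    [CommMonoid M] (g : ι → M) (k : ι) :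
    ∏ x ∈ univ.erase k, g x = ∏ x, Function.update g k 1 x := by
  rw [prod_update_of_mem (mem_univ k), one_mul, sdiff_singleton_eq_erase]

theorem Fintype.prod_erase_none {α M : Type*} [Fintype α] [DecidableEq α] [CommMonoid M]
    (g : Option α → M) : ∏ x ∈ univ.erase none, g x = ∏ i, g (some i) := by
  rw [prod_erase_eq_prod_update, prod_option]
  simp

theorem Fintype.prod_erase_some_inr {α β M : Type*} [Fintype α] [Fintype β] [DecidableEq α]
    [DecidableEq β] [CommMonoid M] (g : Option (α ⊕ β) → M) (j : β) :
    ∏ x ∈ univ.erase (some (.inr j)), g x =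
      g none * ((∏ i, g (some (.inl i))) * ∏ b ∈ univ.erase j, g (some (.inr b))) := by
  rw [prod_erase_eq_prod_update, prod_erase_eq_prod_update, prod_option, prod_sum_type]
  simp [Function.update_apply]

theorem natDegree_C_mul_X_sub_C_le {R : Type*} [CommRing R] (a b : R) :
    (C a * X - C b).natDegree ≤ 1 := by
  compute_degree

theorem natDegree_prod_C_mul_X_sub_C_le {R ι : Type*} [CommRing R] (s : Finset ι)
    (α β : ι → R) : (∏ i ∈ s, (C (α i) * X - C (β i))).natDegree ≤ #s :=
  (natDegree_prod_le _ _).trans <| by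
    simpa using sum_le_sum fun i (_ : i ∈ s) => natDegree_C_mul_X_sub_C_le (α i) (β i)

theorem coeff_card_prod_C_mul_X_sub_C {R ι : Type*} [CommRing R] (s : Finset ι) (α β : ι → R) :
    (∏ i ∈ s, (C (α i) * X - C (β i))).coeff #s = ∏ i ∈ s, α i := by
  simpa [coeff_C] using coeff_prod_of_natDegree_le (s := s) _ 1
    fun i _ => natDegree_C_mul_X_sub_C_le (α i) (β i)

theorem one_sub_mul_div_one_sub_mul_eq {K : Type*} [Field K] {u : K} (hu : u ≠ 0) (q z : K) :
    (1 - q * u * z) / (1 - u * z) = (q * z - u⁻¹) / (z - u⁻¹) := by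
  rw [← mul_div_mul_left (q * z - u⁻¹) _ (neg_ne_zero.2 hu)]
  congr 1 <;> linear_combination -mul_inv_cancel₀ hu

theorem mul_inv_sub_div_inv_sub {K : Type*} [Field K] {w : K} (hw : w ≠ 0) (x y : K) :
    (x * w⁻¹ - y) / (w⁻¹ - y) = (x - y * w) / (1 - y * w) := by
  rw [← mul_div_mul_left (x - y * w) _ (inv_ne_zero hw)]
  congr 1 <;> field_simp

section CircleIntegral

variable {c : ℂ} {R : ℝ}

theorem circleIntegral_sub_inv_of_notMem_closedBall (hR : 0 ≤ R) {w : ℂ}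
    (hw : w ∉ closedBall c R) : (∮ z in C(c, R), (z - w)⁻¹) = 0 := by
  have hne : ∀ z ∈ closedBall c R, z - w ≠ 0 := fun z hz =>
    sub_ne_zero.2 (ne_of_mem_of_not_mem hz hw)
  refine circleIntegral_eq_zero_of_differentiable_on_off_countable hR Set.countable_empty
    ((continuousOn_id.sub continuousOn_const).inv₀ hne) fun z hz => ?_
  exact (differentiableAt_id.sub_const w).inv (hne z (ball_subset_closedBall hz.1))

open Classical in
theorem circleIntegral_div_sub (hR : 0 ≤ R) {w : ℂ} (hw : w ∉ sphere c R) (ρ : ℂ) :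
    (∮ z in C(c, R), ρ / (z - w)) = if w ∈ ball c R then 2 * π * I * ρ else 0 := by
  simp_rw [div_eq_mul_inv, circleIntegral.integral_const_mul]
  split_ifs with hb
  · rw [circleIntegral.integral_sub_inv_of_mem_ball hb, mul_comm]
  · have hw' : w ∉ closedBall c R := by
      rw [← ball_union_sphere]
      exact fun h => h.elim hb hw
    rw [circleIntegral_sub_inv_of_notMem_closedBall hR hw', mul_zero]

open Classical in
theorem circleIntegral_sum_div_sub {ι : Type*} (s : Finset ι) (ρ w : ι → ℂ) (hR : 0 ≤ R)
    (hw : ∀ i ∈ s, w i ∉ sphere c R) :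
    (∮ z in C(c, R), ∑ i ∈ s, ρ i / (z - w i)) =
      2 * π * I * ∑ i ∈ s with w i ∈ ball c R, ρ i := by
  have hint : ∀ i ∈ s, CircleIntegrable (fun z => ρ i / (z - w i)) c R := fun i hi => by
    simp_rw [div_eq_mul_inv]
    exact (circleIntegrable_sub_inv_iff.2
      (Or.inr (by rw [abs_of_nonneg hR]; exact hw i hi))).const_mul _
  rw [circleIntegral.integral_fun_sum hint, sum_filter, mul_sum]
  refine sum_congr rfl fun i hi => ?_
  rw [circleIntegral_div_sub hR (hw i hi), mul_ite, mul_zero]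

open Classical in
theorem circleIntegral_eval_div_prod_sub {ι : Type*} [DecidableEq ι] {s : Finset ι}
    {v : ι → ℂ} (hvs : Set.InjOn v s) {P : ℂ[X]} (hP : P.degree < #s) (hR : 0 ≤ R)
    (hv : ∀ i ∈ s, v i ∉ sphere c R) :
    (∮ z in C(c, R), P.eval z / ∏ i ∈ s, (z - v i)) =
      2 * π * I * ∑ i ∈ s with v i ∈ ball c R, nodalResidue s v P i := by
  rw [← circleIntegral_sum_div_sub s _ v hR hv]
  refine circleIntegral.integral_congr hR fun z hz => ?_
  exact eval_div_prod_sub_eq_sum_nodalResidue hvs hP fun i hi h => hv i hi (h ▸ hz)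

end CircleIntegral

section DNIntegral

variable {N T : ℕ}

noncomputable def dnPole (a : Fin N → ℂ) (u : Fin T → ℂ) : Option (Fin N ⊕ Fin T) → ℂ
  | none => 0
  | some (.inl i) => a i
  | some (.inr j) => (u j)⁻¹

noncomputable def dnNumerator (q : ℂ) (a ν : Fin N → ℂ) (u : Fin T → ℂ) : ℂ[X] :=
  ∏ k, (C (Sum.elim ν (fun _ => q) k) * X - C (dnPole a u (some k)))

theorem dnPole_injective {a : Fin N → ℂ} {u : Fin T → ℂ} (ha : Function.Injective a)
    (hu : Function.Injective u) (ha0 : ∀ i, a i ≠ 0) (hu0 : ∀ j, u j ≠ 0)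
    (hau : ∀ i j, a i ≠ (u j)⁻¹) : Function.Injective (dnPole a u) := by
  have hua : ∀ i j, (u j)⁻¹ ≠ a i := fun i j h => hau i j h.symm
  rintro (_ | i | j) (_ | i' | j') h <;>
    simp_all [dnPole, ha.eq_iff, hu.eq_iff, eq_comm (a := (0 : ℂ))]

theorem dnNumerator_degree_lt (q : ℂ) (a ν : Fin N → ℂ) (u : Fin T → ℂ) :
    (dnNumerator q a ν u).degree < #(univ : Finset (Option (Fin N ⊕ Fin T))) := by
  refine degree_le_natDegree.trans_lt ?_
  have := natDegree_prod_C_mul_X_sub_C_le univ (Sum.elim ν fun _ => q)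
    fun k => dnPole a u (some k)
  simp only [card_univ, Fintype.card_option] at this ⊢
  exact_mod_cast Nat.lt_succ_of_le this

theorem dnNumerator_coeff (q : ℂ) (a ν : Fin N → ℂ) (u : Fin T → ℂ) :
    (dnNumerator q a ν u).coeff (N + T) = q ^ T * ∏ i, ν i := by
  have := coeff_card_prod_C_mul_X_sub_C univ (Sum.elim ν fun _ => q)
    fun k => dnPole a u (some k)
  simp only [card_univ, Fintype.card_sum, Fintype.card_fin] at this
  rw [dnNumerator, this, Fintype.prod_sum_type]
  simp [mul_comm]

theorem dn_integrand_eq_eval_div_prod (q : ℂ) (a ν : Fin N → ℂ) {u : Fin T → ℂ}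
    (hu0 : ∀ j, u j ≠ 0) (z : ℂ) :
    (∏ i, (a i - ν i * z) / (a i - z)) * (∏ j, (1 - q * u j * z) / (1 - u j * z)) / z =
      (dnNumerator q a ν u).eval z / ∏ k, (z - dnPole a u k) := by
  have hA : ∀ i, (a i - ν i * z) / (a i - z) = (ν i * z - a i) / (z - a i) := fun i => by
    rw [← neg_div_neg_eq, neg_sub, neg_sub]
  simp only [hA, one_sub_mul_div_one_sub_mul_eq (hu0 _), dnNumerator, Fintype.prod_option,
    Fintype.prod_sum_type, prod_div_distrib, dnPole, eval_prod, eval_sub, eval_mul, eval_C,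
    eval_X, sub_zero, Sum.elim_inl, Sum.elim_inr]
  ring

theorem nodalResidue_dnPole_none (q : ℂ) {a : Fin N → ℂ} (ν : Fin N → ℂ) {u : Fin T → ℂ}
    (ha0 : ∀ i, a i ≠ 0) (hu0 : ∀ j, u j ≠ 0) :
    nodalResidue univ (dnPole a u) (dnNumerator q a ν u) none = 1 := by
  rw [nodalResidue, Fintype.prod_erase_none, dnNumerator, eval_prod]
  simp only [dnPole.eq_1, eval_sub, eval_mul, eval_C, eval_X, mul_zero, zero_sub]
  refine div_self (prod_ne_zero_iff.2 fun k _ => neg_ne_zero.2 ?_)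
  rcases k with i | j
  exacts [ha0 i, inv_ne_zero (hu0 j)]

theorem nodalResidue_dnPole_some_inr (q : ℂ) (a ν : Fin N → ℂ) {u : Fin T → ℂ}
    (hu0 : ∀ j, u j ≠ 0) (j : Fin T) :
    nodalResidue univ (dnPole a u) (dnNumerator q a ν u) (some (.inr j)) =
      -((1 - q) * ((∏ i, (ν i - a i * u j) / (1 - a i * u j)) *
        ∏ b ∈ univ.erase j, (u j - q * u b) / (u j - u b))) := by
  have hj : (q * (u j)⁻¹ - (u j)⁻¹) / ((u j)⁻¹ - 0) = -(1 - q) := by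
    field_simp [hu0 j]
    ring
  have hb : ∀ b, (q * (u j)⁻¹ - (u b)⁻¹) / ((u j)⁻¹ - (u b)⁻¹) = (u j - q * u b) / (u j - u b) :=
    fun b => by
      rw [← mul_div_mul_left (u j - q * u b) _
        (neg_ne_zero.2 (inv_ne_zero (mul_ne_zero (hu0 j) (hu0 b))))]
      congr 1 <;> field_simp [hu0 j, hu0 b] <;> ring
  rw [nodalResidue, Fintype.prod_erase_some_inr, dnNumerator, eval_prod, Fintype.prod_sum_type,
    ← mul_prod_erase univ _ (mem_univ j)]
  simp only [dnPole, eval_sub, eval_mul, eval_C, eval_X, Sum.elim_inl, Sum.elim_inr]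
  calc _ = (q * (u j)⁻¹ - (u j)⁻¹) / ((u j)⁻¹ - 0) *
        ((∏ i, (ν i * (u j)⁻¹ - a i) / ((u j)⁻¹ - a i)) *
          ∏ b ∈ univ.erase j, (q * (u j)⁻¹ - (u b)⁻¹) / ((u j)⁻¹ - (u b)⁻¹)) := by
        rw [prod_div_distrib, prod_div_distrib]
        ring
    _ = _ := by simp only [hj, hb, mul_inv_sub_div_inv_sub (hu0 j), neg_mul]

theorem sum_nodalResidue_dnPole (q : ℂ) (a ν : Fin N → ℂ) (u : Fin T → ℂ)
    (hinj : Function.Injective (dnPole a u)) :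
    ∑ k, nodalResidue univ (dnPole a u) (dnNumerator q a ν u) k = q ^ T * ∏ i, ν i := by
  have h := coeff_eq_sum hinj.injOn (dnNumerator_degree_lt q a ν u)
  simp only [card_univ, Fintype.card_option, Fintype.card_sum, Fintype.card_fin,
    add_tsub_cancel_right, dnNumerator_coeff] at h
  exact h.symm

open Classical in
theorem sum_filter_dnPole_mem_ball (g : Option (Fin N ⊕ Fin T) → ℂ) {a : Fin N → ℂ}
    {u : Fin T → ℂ} {c : ℂ} {R : ℝ} (h0 : 0 ∉ ball c R) (ha : ∀ i, a i ∈ ball c R)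
    (hu : ∀ j, (u j)⁻¹ ∉ ball c R) :
    ∑ k with dnPole a u k ∈ ball c R, g k = ∑ i, g (some (.inl i)) := by
  rw [sum_filter, Fintype.sum_option, Fintype.sum_sum_type]
  simp [dnPole, h0, ha, hu]

end DNIntegral

/-- evaluation of the `D_N` contour integral for `f ≡ 1`:
`-(1/(2πi)) ∮ (∏_{i=1}^{N} (a_i - ν_i z)/(a_i - z)) ∏_{j=1}^{T} ((1 - q u_j z)/(1 - u_j z)) dz/z`,
over a (positively oriented) contour enclosing `a_1,…,a_N` only (in particular
`0` and the points `u_j^{-1}` lie outside), equals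
`1 - q^T ν_1⋯ν_N - (1-q) ∑_{j=1}^{T} (∏_{i=1}^{N}(ν_i - a_i u_j)/(1 - a_i u_j))
 ∏_{β≠j} (u_j - q u_β)/(u_j - u_β)`. -/
theorem DN_integral_evaluation (N T : ℕ) (q : ℂ) (a ν : Fin N → ℂ)
    (u : Fin T → ℂ) (c : ℂ) (R : ℝ) (hR : 0 < R)
    (hain : ∀ i, a i ∈ ball c R) (hainj : Function.Injective a)
    (hu0 : ∀ j, u j ≠ 0) (huinj : Function.Injective u)
    (h0 : (0 : ℂ) ∉ closedBall c R)
    (huout : ∀ j, (u j)⁻¹ ∉ closedBall c R) :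
    -(1 / (2 * Real.pi * Complex.I)) *
        (∮ z in C(c, R),
          (∏ i : Fin N, (a i - ν i * z) / (a i - z)) *
            (∏ j : Fin T, (1 - q * u j * z) / (1 - u j * z)) / z)
      = 1 - q ^ T * (∏ i : Fin N, ν i) -
          (1 - q) * ∑ j : Fin T,
            (∏ i : Fin N, (ν i - a i * u j) / (1 - a i * u j)) *
              ∏ b ∈ Finset.univ.erase j, (u j - q * u b) / (u j - u b) := by
  have ha0 : ∀ i, a i ≠ 0 := fun i h => h0 (h ▸ ball_subset_closedBall (hain i))
  have hau : ∀ i j, a i ≠ (u j)⁻¹ := fun i j h => huout j (h ▸ ball_subset_closedBall (hain i))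
  have hinj := dnPole_injective hainj huinj ha0 hu0 hau
  have hpoles : ∀ k ∈ univ, dnPole a u k ∉ sphere c R := by
    rintro (_ | i | j) _ h
    exacts [h0 (sphere_subset_closedBall h), (mem_ball.1 (hain i)).ne (mem_sphere.1 h),
      huout j (sphere_subset_closedBall h)]
  have hsum := sum_nodalResidue_dnPole q a ν u hinj
  rw [Fintype.sum_option, Fintype.sum_sum_type, nodalResidue_dnPole_none q ν ha0 hu0] at hsum
  simp only [nodalResidue_dnPole_some_inr q a ν hu0, sum_neg_distrib, ← mul_sum] at hsum
  simp_rw [dn_integrand_eq_eval_div_prod q a ν hu0]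
  rw [circleIntegral_eval_div_prod_sub hinj.injOn (dnNumerator_degree_lt q a ν u) hR.le hpoles,
    sum_filter_dnPole_mem_ball _ (fun h => h0 (ball_subset_closedBall h)) hain
      fun j h => huout j (ball_subset_closedBall h)]
  have hπ : (2 * π * I : ℂ) ≠ 0 := by simp [Real.pi_ne_zero, I_ne_zero]
  field_simp
  linear_combination -hsum
end
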